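/- arXiv:2111.10389 — 3 statements merged into one kernel-verified Lean document; each statement's English description precedes it below -/
import Mathlib

section
/- Let O be a complete discrete valuation ring with maximal ideal m and residue field of size λ, and let k ≥ 1. If b, M ∈ O/m^k satisfy v(b) ≤ v(M) (where v is the reduced valuation taking values in {0,...,k}), then the number of elements c ∈ O/m^k with bc = M is exactly λ^{v(b)}. -/
/-!
Pick a uniformizer `ϖ` and let `v = v(b)`. Then `b` is `ϖ ^ v` times a unit of `O ⧸ m ^ k`
(if `v < k` a lift of `b` is `ϖ ^ v` times a non-multiple of `ϖ`; if `v = k` then `b = 0`), and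
`v ≤ v(M)` makes `M` a multiple of `ϖ ^ v`, so `b c = M` is solvable. Its solutions form a coset
of the annihilator of `ϖ ^ v` in `O ⧸ m ^ k`, which is `m ^ (k - v) ⧸ m ^ k ≅ O ⧸ m ^ v`, of
cardinality `λ ^ v`.
-/

open scoped Classical

/-- The "reduced valuation" on `O ⧸ m ^ k`: the largest `i ≤ k` such that `a` lies in the
image of `m ^ i` under the reduction map `O → O ⧸ m ^ k`. -/
noncomputable def redVal {O : Type*} [CommRing O] (m : Ideal O) (k : ℕ)
    (a : O ⧸ m ^ k) : ℕ :=
  Nat.findGreatest (fun i => a ∈ (m ^ i).map (Ideal.Quotient.mk (m ^ k))) k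

open IsLocalRing

section redVal

variable {O : Type*} [CommRing O] (m : Ideal O) {k : ℕ} (a : O ⧸ m ^ k)

lemma redVal_le : redVal m k a ≤ k := Nat.findGreatest_le k

lemma mem_map_pow_of_le_redVal {i : ℕ} (hi : i ≤ redVal m k a) :
    a ∈ (m ^ i).map (Ideal.Quotient.mk (m ^ k)) := by
  have h₀ : a ∈ (m ^ 0).map (Ideal.Quotient.mk (m ^ k)) := by
    simp [Ideal.one_eq_top, Ideal.map_top]
  exact Ideal.map_mono (Ideal.pow_le_pow_right hi)
    (Nat.findGreatest_spec (P := fun i => a ∈ (m ^ i).map (Ideal.Quotient.mk (m ^ k)))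
      (Nat.zero_le k) h₀)

lemma notMem_map_pow_of_redVal_lt {i : ℕ} (hlt : redVal m k a < i) (hik : i ≤ k) :
    a ∉ (m ^ i).map (Ideal.Quotient.mk (m ^ k)) :=
  Nat.findGreatest_is_greatest hlt hik

end redVal

lemma Nat.card_setOf_mul_eq_of_mul_eq {R : Type*} [NonUnitalRing R] {b c₀ M : R}
    (h : b * c₀ = M) : Nat.card {c | b * c = M} = Nat.card {c | b * c = 0} :=
  Nat.card_congr <| (Equiv.subRight c₀).subtypeEquiv fun c => by
    simp [mul_sub, h, sub_eq_zero]

lemma IsDiscreteValuationRing.card_quotient_maximalIdeal_pow {O : Type*} [CommRing O]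
    [IsDomain O] [IsDiscreteValuationRing O] (n : ℕ) :
    Nat.card (O ⧸ IsLocalRing.maximalIdeal O ^ n) =
      Nat.card (O ⧸ IsLocalRing.maximalIdeal O) ^ n := by
  simpa only [Submodule.cardQuot_apply] using
    cardQuot_pow_of_prime (P := IsLocalRing.maximalIdeal O) (not_a_field O) (i := n)

namespace Irreducible

variable {O : Type*} [CommRing O] [IsDomain O] [IsDiscreteValuationRing O] {ϖ : O}
  (hϖ : Irreducible ϖ)
include hϖ

lemma mem_maximalIdeal_pow_iff {n : ℕ} {x : O} : x ∈ maximalIdeal O ^ n ↔ ϖ ^ n ∣ x := by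
  rw [hϖ.maximalIdeal_eq, Ideal.span_singleton_pow, Ideal.mem_span_singleton]

lemma mk_maximalIdeal_pow_eq_zero_iff {n : ℕ} {x : O} :
    Ideal.Quotient.mk (maximalIdeal O ^ n) x = 0 ↔ ϖ ^ n ∣ x := by
  rw [Ideal.Quotient.eq_zero_iff_mem, hϖ.mem_maximalIdeal_pow_iff]

lemma exists_eq_mk_pow_mul_of_le_redVal {k i : ℕ} (a : O ⧸ maximalIdeal O ^ k)
    (hi : i ≤ redVal (maximalIdeal O) k a) :
    ∃ x, a = Ideal.Quotient.mk (maximalIdeal O ^ k) (ϖ ^ i * x) := by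
  obtain ⟨y, hy, rfl⟩ := (Ideal.mem_map_iff_of_surjective _ Ideal.Quotient.mk_surjective).mp
    (mem_map_pow_of_le_redVal _ a hi)
  obtain ⟨x, rfl⟩ := hϖ.mem_maximalIdeal_pow_iff.mp hy
  exact ⟨x, rfl⟩

lemma exists_eq_mk_pow_redVal_mul_unit {k : ℕ} (a : O ⧸ maximalIdeal O ^ k) :
    ∃ w : Oˣ,
      a = Ideal.Quotient.mk (maximalIdeal O ^ k) (ϖ ^ redVal (maximalIdeal O) k a * w) := by
  set v := redVal (maximalIdeal O) k a
  obtain ⟨u, hu⟩ := hϖ.exists_eq_mk_pow_mul_of_le_redVal a le_rfl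
  rcases (redVal_le _ a).lt_or_eq with hvk | hvk
  · have hndvd : ¬ ϖ ∣ u := fun ⟨t, ht⟩ => by
      refine notMem_map_pow_of_redVal_lt _ a (Nat.lt_succ_self v) hvk ?_
      rw [hu]
      exact Ideal.mem_map_of_mem _
        (hϖ.mem_maximalIdeal_pow_iff.mpr ⟨t, by rw [ht, pow_succ, mul_assoc]⟩)
    have hunit : IsUnit u := notMem_maximalIdeal.mp fun h => hndvd <| by
      rwa [hϖ.maximalIdeal_eq, Ideal.mem_span_singleton] at h
    exact ⟨hunit.unit, hu⟩
  · refine ⟨1, ?_⟩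
    rw [hu, Ideal.Quotient.eq, ← mul_sub, hϖ.mem_maximalIdeal_pow_iff, hvk]
    exact dvd_mul_right _ _

lemma card_setOf_mk_pow_mul_eq_zero {k v : ℕ} (hvk : v ≤ k) :
    Nat.card {c : O ⧸ maximalIdeal O ^ k | Ideal.Quotient.mk _ (ϖ ^ v) * c = 0} =
      Nat.card (O ⧸ maximalIdeal O ^ v) := by
  have hdvd : ∀ {j : ℕ} (x : O), j ≤ k → (ϖ ^ k ∣ ϖ ^ j * x ↔ ϖ ^ (k - j) ∣ x) :=
    fun {j} x hj => by
      rw [← Nat.add_sub_cancel' hj, pow_add, Nat.add_sub_cancel_left,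
        mul_dvd_mul_iff_left (pow_ne_zero _ hϖ.ne_zero)]
  let f : O →ₗ[O] O ⧸ maximalIdeal O ^ k :=
    (maximalIdeal O ^ k).mkQ ∘ₗ LinearMap.mulLeft O (ϖ ^ (k - v))
  have hf : ∀ x, f x = Ideal.Quotient.mk _ (ϖ ^ (k - v) * x) := fun _ => rfl
  have hker : LinearMap.ker f = maximalIdeal O ^ v := by
    ext x
    rw [LinearMap.mem_ker, hf, hϖ.mk_maximalIdeal_pow_eq_zero_iff, hdvd _ (Nat.sub_le k v),
      Nat.sub_sub_self hvk, hϖ.mem_maximalIdeal_pow_iff]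
  have hrange : (LinearMap.range f : Set _) =
      {c : O ⧸ maximalIdeal O ^ k | Ideal.Quotient.mk _ (ϖ ^ v) * c = 0} := by
    ext c
    obtain ⟨y, rfl⟩ := Ideal.Quotient.mk_surjective c
    rw [SetLike.mem_coe, LinearMap.mem_range, Set.mem_ofPred_eq, ← map_mul,
      hϖ.mk_maximalIdeal_pow_eq_zero_iff, hdvd _ hvk]
    constructor
    · rintro ⟨x, hx⟩
      rw [hf, Ideal.Quotient.eq, hϖ.mem_maximalIdeal_pow_iff] at hx
      exact (dvd_sub_right (dvd_mul_right _ x)).mp ((pow_dvd_pow ϖ (k.sub_le v)).trans hx)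
    · rintro ⟨x, rfl⟩
      exact ⟨x, rfl⟩
  calc Nat.card {c : O ⧸ maximalIdeal O ^ k | Ideal.Quotient.mk _ (ϖ ^ v) * c = 0}
      = Nat.card (LinearMap.range f) := Nat.card_congr (Equiv.setCongr hrange.symm)
    _ = Nat.card (O ⧸ maximalIdeal O ^ v) :=
      Nat.card_congr ((Submodule.quotEquivOfEq _ _ hker.symm).trans f.quotKerEquivRange).symm

end Irreducible

theorem stmt_0_general {O : Type*} [CommRing O] [IsDomain O] [IsDiscreteValuationRing O]
    (lam : ℕ) (hlam : Nat.card (O ⧸ IsLocalRing.maximalIdeal O) = lam)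
    (k : ℕ)
    (b M : O ⧸ (IsLocalRing.maximalIdeal O) ^ k)
    (hbM : redVal (IsLocalRing.maximalIdeal O) k b ≤ redVal (IsLocalRing.maximalIdeal O) k M) :
    Nat.card {c : O ⧸ (IsLocalRing.maximalIdeal O) ^ k | b * c = M} =
      lam ^ redVal (IsLocalRing.maximalIdeal O) k b := by
  obtain ⟨ϖ, hϖ⟩ := IsDiscreteValuationRing.exists_irreducible O
  set v := redVal (maximalIdeal O) k b
  set mk := Ideal.Quotient.mk (maximalIdeal O ^ k)
  obtain ⟨w, hb⟩ := hϖ.exists_eq_mk_pow_redVal_mul_unit b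
  obtain ⟨N, hM⟩ := hϖ.exists_eq_mk_pow_mul_of_le_redVal M hbM
  have hsol : b * mk (↑w⁻¹ * N) = M := by
    rw [hb, hM, ← map_mul, mul_assoc, ← mul_assoc (w : O), Units.mul_inv, one_mul]
  have hann : {c | b * c = 0} = {c | mk (ϖ ^ v) * c = 0} := by
    ext c
    rw [Set.mem_ofPred_eq, Set.mem_ofPred_eq, hb, map_mul, mul_right_comm,
      ((w.isUnit).map mk).mul_left_eq_zero]
  rw [Nat.card_setOf_mul_eq_of_mul_eq hsol, hann,
    hϖ.card_setOf_mk_pow_mul_eq_zero (redVal_le _ b),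
    IsDiscreteValuationRing.card_quotient_maximalIdeal_pow, hlam]

theorem stmt_0 {O : Type*} [CommRing O] [IsDomain O] [IsDiscreteValuationRing O]
    [IsAdicComplete (IsLocalRing.maximalIdeal O) O]
    (lam : ℕ) (hlam : Nat.card (O ⧸ IsLocalRing.maximalIdeal O) = lam)
    (k : ℕ) (hk : 1 ≤ k)
    (b M : O ⧸ (IsLocalRing.maximalIdeal O) ^ k)
    (hbM : redVal (IsLocalRing.maximalIdeal O) k b ≤ redVal (IsLocalRing.maximalIdeal O) k M) :
    Nat.card {c : O ⧸ (IsLocalRing.maximalIdeal O) ^ k | b * c = M} =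
      lam ^ redVal (IsLocalRing.maximalIdeal O) k b :=
  stmt_0_general lam hlam k b M hbM
end

section
/- Let O be a complete discrete valuation ring with maximal ideal m and residue field of size λ. Fix D ∈ (O/m)^× with D ≠ 1. Then the number of matrices g ∈ GL_2(O/m) with det(g) = D and det(g-1) ≠ 0 equals λ(λ-2)(λ+1). -/
/-!
Write `g = !![a, b; c, d]`. Since `det (g - 1) = det g - tr g + 1`, the conditions say
`a + d ≠ D + 1` and `b * c = a * d - D`. Over a field with `q` elements, `x * y = e` has
`q - 1` solutions, plus `q` more when `e = 0`. Of the `q² - q` diagonals `(a, d)` with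
`a + d ≠ D + 1`, exactly `q - 3` satisfy `a * d = D`: all points of the hyperbola except the
roots `(1, D)` and `(D, 1)` of `X² - (D + 1) X + D`. Hence the count is
`(q² - q)(q - 1) + q (q - 3) = q (q - 2)(q + 1)`.
-/

section FiniteField

open Finset

theorem Finset.card_filter_prod_eq_sum {α β : Type*} [Fintype α] [Fintype β]
    (r : α → β → Prop) [∀ a, DecidablePred (r a)] :
    #{x : α × β | r x.1 x.2} = ∑ a, #{b | r a b} := by
  simp only [card_filter, Fintype.sum_prod_type]

variable {F : Type*} [Field F] [Fintype F] [DecidableEq F]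

theorem card_filter_add_eq (t : F) : #{x : F × F | x.1 + x.2 = t} = Fintype.card F := by
  have hfiber (a : F) : #{b | a + b = t} = 1 := by
    simp [← eq_sub_iff_add_eq', filter_eq']
  simp [card_filter_prod_eq_sum (fun a b => a + b = t), hfiber]

theorem card_filter_add_ne (t : F) :
    #{x : F × F | x.1 + x.2 ≠ t} + Fintype.card F = Fintype.card F * Fintype.card F := by
  have h := card_filter_add_card_filter_not (s := univ) (fun x : F × F => x.1 + x.2 = t)
  rwa [card_filter_add_eq, card_univ, Fintype.card_prod, add_comm] at h

theorem card_filter_mul_eq (e : F) :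
    #{x : F × F | x.1 * x.2 = e} = Fintype.card F - 1 + if e = 0 then Fintype.card F else 0 := by
  have hfiber (a : F) (ha : a ≠ 0) : #{b | a * b = e} = 1 := by
    simp [← eq_inv_mul_iff_mul_eq₀ ha, filter_eq']
  rw [card_filter_prod_eq_sum (fun a b => a * b = e), ← add_sum_erase _ _ (mem_univ 0),
    sum_congr rfl fun a ha => hfiber a (ne_of_mem_erase ha)]
  split_ifs with he <;> simp [card_erase_of_mem, he, add_comm, eq_comm]

theorem filter_mul_eq_and_add_eq_add_one (D : F) :
    ({x : F × F | x.1 * x.2 = D ∧ x.1 + x.2 = D + 1} : Finset (F × F)) = {(1, D), (D, 1)} := by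
  ext ⟨a, d⟩
  simp only [mem_filter, mem_univ, true_and, mem_insert, mem_singleton, Prod.mk.injEq]
  constructor
  · rintro ⟨hprod, hsum⟩
    obtain rfl : d = D + 1 - a := by linear_combination hsum
    have hroot : (a - 1) * (a - D) = 0 := by linear_combination -hprod
    rcases mul_eq_zero.mp hroot with ha | ha
    · exact .inl ⟨by linear_combination ha, by linear_combination -ha⟩
    · exact .inr ⟨by linear_combination ha, by linear_combination -ha⟩
  · rintro (⟨rfl, rfl⟩ | ⟨rfl, rfl⟩) <;> constructor <;> ring

theorem card_filter_add_ne_and_mul_eq {D : F} (hD0 : D ≠ 0) (hD1 : D ≠ 1) :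
    #{x : F × F | x.1 + x.2 ≠ D + 1 ∧ x.1 * x.2 = D} + 2 = Fintype.card F - 1 := by
  have hpair : #({(1, D), (D, 1)} : Finset (F × F)) = 2 :=
    card_pair (by simp [Prod.ext_iff, hD1.symm])
  have hprod := card_filter_mul_eq D
  rw [if_neg hD0, add_zero] at hprod
  rw [← hprod, ← card_filter_add_card_filter_not (s := {x : F × F | x.1 * x.2 = D})
    (fun x => x.1 + x.2 = D + 1), filter_filter, filter_filter,
    filter_mul_eq_and_add_eq_add_one, hpair, add_comm]
  simp only [and_comm]

theorem card_filter_add_ne_and_mul_eq_mul_sub {D : F} (hD0 : D ≠ 0) (hD1 : D ≠ 1) :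
    #{x : (F × F) × (F × F) | x.1.1 + x.1.2 ≠ D + 1 ∧ x.2.1 * x.2.2 = x.1.1 * x.1.2 - D}
      = Fintype.card F * (Fintype.card F - 2) * (Fintype.card F + 1) := by
  have hfiber (a : F × F) : #{b : F × F | a.1 + a.2 ≠ D + 1 ∧ b.1 * b.2 = a.1 * a.2 - D}
      = if a.1 + a.2 ≠ D + 1 then #{b : F × F | b.1 * b.2 = a.1 * a.2 - D} else 0 := by
    split_ifs with ha <;> simp [ha]
  refine (card_filter_prod_eq_sum
    (fun (a b : F × F) => a.1 + a.2 ≠ D + 1 ∧ b.1 * b.2 = a.1 * a.2 - D)).trans ?_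
  simp only [hfiber, card_filter_mul_eq, sub_eq_zero]
  rw [← sum_filter, sum_add_distrib, sum_const, sum_ite, sum_const, sum_const_zero,
    filter_filter, smul_eq_mul, smul_eq_mul, add_zero]
  have hS := card_filter_add_ne (D + 1)
  have hT := card_filter_add_ne_and_mul_eq hD0 hD1
  obtain ⟨m, hm⟩ : ∃ m, Fintype.card F = m + 3 := ⟨Fintype.card F - 3, by omega⟩
  rw [hm] at hS hT ⊢
  rw [show #{x : F × F | x.1 + x.2 ≠ D + 1} = (m + 3) * (m + 2) by linarith,
    show #{x : F × F | x.1 + x.2 ≠ D + 1 ∧ x.1 * x.2 = D} = m by omega,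
    show m + 3 - 1 = m + 2 by omega, show m + 3 - 2 = m + 1 by omega]
  ring

end FiniteField

namespace Matrix

def finTwoDiagOffDiagEquiv (R : Type*) : Matrix (Fin 2) (Fin 2) R ≃ (R × R) × (R × R) where
  toFun g := ((g 0 0, g 1 1), (g 0 1, g 1 0))
  invFun x := !![x.1.1, x.2.1; x.2.2, x.1.2]
  left_inv g := (eta_fin_two g).symm
  right_inv _ := rfl

variable {R : Type*} [CommRing R]

theorem det_sub_one_fin_two (g : Matrix (Fin 2) (Fin 2) R) :
    (g - 1).det = g.det - g.trace + 1 := by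
  simp [det_fin_two, trace_fin_two]
  ring

theorem det_sub_one_ne_zero_iff_of_det_eq {g : Matrix (Fin 2) (Fin 2) R} {D : R}
    (hg : g.det = D) : (g - 1).det ≠ 0 ↔ g.trace ≠ D + 1 := by
  rw [det_sub_one_fin_two, hg, sub_add_eq_add_sub, sub_ne_zero, ne_comm]

theorem det_eq_and_trace_ne_iff (g : Matrix (Fin 2) (Fin 2) R) (D t : R) :
    g.det = D ∧ g.trace ≠ t ↔ g 0 0 + g 1 1 ≠ t ∧ g 0 1 * g 1 0 = g 0 0 * g 1 1 - D := by
  rw [det_fin_two, trace_fin_two, and_comm]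
  exact and_congr_right fun _ =>
    ⟨fun h => by linear_combination -h, fun h => by linear_combination -h⟩

theorem infinite_setOf_det_eq_trace_ne [Infinite R] (D t : R) :
    {g : Matrix (Fin 2) (Fin 2) R | g.det = D ∧ g.trace ≠ t}.Infinite := by
  have hinj : Function.Injective fun s : R => !![0, -D; 1, s] := fun s s' h => by
    simpa using congrFun (congrFun h 1) 1
  refine ((Set.finite_singleton t).infinite_compl.image hinj.injOn).mono ?_
  rintro _ ⟨s, hs, rfl⟩
  simpa [det_fin_two, trace_fin_two] using hs

theorem card_setOf_det_eq_det_sub_one_ne_zero {F : Type*} [Field F] {D : F} (hD0 : D ≠ 0)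
    (hD1 : D ≠ 1) :
    Nat.card {g : Matrix (Fin 2) (Fin 2) F | g.det = D ∧ (g - 1).det ≠ 0}
      = Nat.card F * (Nat.card F - 2) * (Nat.card F + 1) := by
  have hset : {g : Matrix (Fin 2) (Fin 2) F | g.det = D ∧ (g - 1).det ≠ 0}
      = {g | g.det = D ∧ g.trace ≠ D + 1} :=
    Set.ext fun _ => and_congr_right det_sub_one_ne_zero_iff_of_det_eq
  rw [hset]
  cases finite_or_infinite F
  · have := Fintype.ofFinite F
    classical
    rw [Set.coe_ofPred, Nat.card_congr ((finTwoDiagOffDiagEquiv F).subtypeEquiv (q := fun x =>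
        x.1.1 + x.1.2 ≠ D + 1 ∧ x.2.1 * x.2.2 = x.1.1 * x.1.2 - D)
        fun g => det_eq_and_trace_ne_iff g D (D + 1)), Nat.card_eq_fintype_card,
      Fintype.card_subtype, Nat.card_eq_fintype_card]
    exact card_filter_add_ne_and_mul_eq_mul_sub hD0 hD1
  · -- `Nat.card` vanishes on infinite types, so both sides are `0`.
    have := (infinite_setOf_det_eq_trace_ne D (D + 1)).to_subtype
    simp [Nat.card_eq_zero_of_infinite]

end Matrix

theorem stmt_3_general {O : Type*} [CommRing O] [IsDomain O] [IsDiscreteValuationRing O]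
    (lam : ℕ) (hlam : Nat.card (O ⧸ IsLocalRing.maximalIdeal O) = lam)
    (D : O ⧸ IsLocalRing.maximalIdeal O) (hD : IsUnit D) (hD1 : D ≠ 1) :
    Nat.card {g : Matrix (Fin 2) (Fin 2) (O ⧸ IsLocalRing.maximalIdeal O) |
        g.det = D ∧ (g - 1).det ≠ 0} = lam * (lam - 2) * (lam + 1) := by
  let _ : Field (O ⧸ IsLocalRing.maximalIdeal O) := IsLocalRing.ResidueField.field O
  subst hlam
  exact Matrix.card_setOf_det_eq_det_sub_one_ne_zero hD.ne_zero hD1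

theorem stmt_3 {O : Type*} [CommRing O] [IsDomain O] [IsDiscreteValuationRing O]
    [IsAdicComplete (IsLocalRing.maximalIdeal O) O]
    (lam : ℕ) (hlam : Nat.card (O ⧸ IsLocalRing.maximalIdeal O) = lam)
    (D : O ⧸ IsLocalRing.maximalIdeal O) (hD : IsUnit D) (hD1 : D ≠ 1) :
    Nat.card {g : Matrix (Fin 2) (Fin 2) (O ⧸ IsLocalRing.maximalIdeal O) |
        g.det = D ∧ (g - 1).det ≠ 0} = lam * (lam - 2) * (lam + 1) :=
  stmt_3_general lam hlam D hD hD1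
end

section
/- Let F be a finite field of cardinality λ. The proportion of matrices g ∈ SL_2(F) with det(g - 1) ≠ 0 equals 1 - λ/(λ²-1). -/
open Finset

section aux
variable {F : Type*} [Field F] [Fintype F] [DecidableEq F]

/-- fibers of multiplication, nonzero case -/
def mulFiberEquivNe (k : F) (hk : k ≠ 0) : {p : F × F // p.1 * p.2 = k} ≃ {b : F // b ≠ 0} where
  toFun p := ⟨p.1.1, fun h => hk (by rw [← p.2, h, zero_mul])⟩
  invFun b := ⟨(b.1, b.1⁻¹ * k), by rw [← mul_assoc, mul_inv_cancel₀ b.2, one_mul]⟩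
  left_inv p := by
    obtain ⟨⟨a, b⟩, hp⟩ := p
    have h1 : a ≠ 0 := fun h => hk (by rw [← hp, h, zero_mul])
    apply Subtype.ext
    show (a, a⁻¹ * k) = (a, b)
    rw [← hp, ← mul_assoc, inv_mul_cancel₀ h1, one_mul]
  right_inv b := rfl

def mulFiberEquivZero : {p : F × F // p.1 * p.2 = 0} ≃ F ⊕ {b : F // b ≠ 0} where
  toFun p := if h : p.1.1 = 0 then .inl p.1.2 else .inr ⟨p.1.1, h⟩
  invFun x := match x with
    | .inl y => ⟨(0, y), zero_mul y⟩
    | .inr b => ⟨(b.1, 0), mul_zero _⟩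
  left_inv p := by
    obtain ⟨⟨a, b⟩, hp⟩ := p
    by_cases h : a = 0
    · subst h
      simp
    · simp only [dif_neg h]
      apply Subtype.ext
      show (a, (0:F)) = (a, b)
      rcases mul_eq_zero.1 hp with h' | h'
      · exact absurd h' h
      · rw [show b = (0:F) from h']
  right_inv x := by
    rcases x with y | b
    · simp
    · simp [b.2]

theorem pairCard (k : F) : Nat.card {p : F × F // p.1 * p.2 = k} =
    if k = 0 then 2 * Fintype.card F - 1 else Fintype.card F - 1 := by
  have hne : Nat.card {b : F // b ≠ 0} = Fintype.card F - 1 := by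
    rw [Nat.card_eq_fintype_card, Fintype.card_subtype_compl, Fintype.card_subtype_eq]
  by_cases h : k = 0
  · subst h
    rw [if_pos rfl, Nat.card_congr mulFiberEquivZero, Nat.card_sum, hne,
      Nat.card_eq_fintype_card]
    have : 1 ≤ Fintype.card F := Fintype.card_pos
    omega
  · rw [if_neg h, Nat.card_congr (mulFiberEquivNe k h), hne]
end aux

section aux2
variable {F : Type*} [Field F] [Fintype F] [DecidableEq F]

lemma detSub1 (M : Matrix (Fin 2) (Fin 2) F) :
    (M - 1).det = (M 0 0 - 1) * (M 1 1 - 1) - M 0 1 * M 1 0 := by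
  rw [Matrix.det_fin_two]
  simp [Matrix.sub_apply, Matrix.one_apply]

def slEquiv : Matrix.SpecialLinearGroup (Fin 2) F ≃
    Σ p : F × F, {q : F × F // q.1 * q.2 = p.1 * p.2 - 1} where
  toFun A := ⟨(A.1 0 0, A.1 1 1), ⟨(A.1 0 1, A.1 1 0), by
    have h := A.2
    rw [Matrix.det_fin_two] at h
    linear_combination -h⟩⟩
  invFun x := ⟨!![x.1.1, x.2.1.1; x.2.1.2, x.1.2], by
    rw [Matrix.det_fin_two_of]
    linear_combination -x.2.2⟩
  left_inv A := by
    apply Subtype.ext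
    show !![A.1 0 0, A.1 0 1; A.1 1 0, A.1 1 1] = A.1
    exact (Matrix.eta_fin_two A.1).symm
  right_inv x := by
    obtain ⟨⟨a, d⟩, ⟨b, c⟩, h⟩ := x
    rfl

def badEquiv : {g : Matrix.SpecialLinearGroup (Fin 2) F //
      ((g : Matrix (Fin 2) (Fin 2) F) - 1).det = 0} ≃
    Σ a : F, {q : F × F // q.1 * q.2 = a * (2 - a) - 1} where
  toFun g := ⟨g.1.1 0 0, ⟨(g.1.1 0 1, g.1.1 1 0), by
    have h1 := g.1.2
    have h2 := g.2
    rw [Matrix.det_fin_two] at h1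
    rw [detSub1] at h2
    linear_combination (g.1.1 0 0 - 1) * h1 - g.1.1 0 0 * h2⟩⟩
  invFun x := ⟨⟨!![x.1, x.2.1.1; x.2.1.2, 2 - x.1], by
      rw [Matrix.det_fin_two_of]
      linear_combination -x.2.2⟩, by
    show (!![x.1, x.2.1.1; x.2.1.2, 2 - x.1] - 1).det = 0
    rw [detSub1]
    show (x.1 - 1) * (2 - x.1 - 1) - x.2.1.1 * x.2.1.2 = 0
    linear_combination -x.2.2⟩
  left_inv g := by
    obtain ⟨⟨M, hM⟩, hb⟩ := g
    have h1 : M.det = 1 := hM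
    rw [Matrix.det_fin_two] at h1
    have h2 : (M - 1).det = 0 := hb
    rw [detSub1] at h2
    have hd : (2 : F) - M 0 0 = M 1 1 := by linear_combination h2 - h1
    apply Subtype.ext
    apply Subtype.ext
    show !![M 0 0, M 0 1; M 1 0, 2 - M 0 0] = M
    rw [hd]
    exact (Matrix.eta_fin_two M).symm
  right_inv x := by
    obtain ⟨a, ⟨b, c⟩, h⟩ := x
    rfl
end aux2
section aux3
variable {F : Type*} [Field F] [Fintype F] [DecidableEq F]

lemma card_bad : Nat.card {g : Matrix.SpecialLinearGroup (Fin 2) F //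
    ((g : Matrix (Fin 2) (Fin 2) F) - 1).det = 0} = Fintype.card F ^ 2 := by
  classical
  set q := Fintype.card F with hq
  clear_value q
  have hq2 : 2 ≤ q := by rw [hq]; exact Fintype.one_lt_card
  have hiff : ∀ a : F, (a * (2 - a) - 1 = 0) ↔ (a = 1) := by
    intro a
    constructor
    · intro h
      have h2 : (a - 1) ^ 2 = 0 := by linear_combination -h
      exact sub_eq_zero.mp (sq_eq_zero_iff.mp h2)
    · rintro rfl; ring
  rw [Nat.card_congr badEquiv, Nat.card_eq_fintype_card, Fintype.card_sigma]
  have step : ∀ a : F, Fintype.card {p : F × F // p.1 * p.2 = a * (2 - a) - 1}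
      = if a = 1 then 2 * q - 1 else q - 1 := fun a => by
    rw [← Nat.card_eq_fintype_card, pairCard, if_congr (hiff a) rfl rfl, hq]
  rw [Finset.sum_congr rfl fun a _ => step a, Finset.sum_ite, Finset.sum_const,
    Finset.sum_const, smul_eq_mul, smul_eq_mul]
  have hf1 : (univ.filter fun a : F => a = 1).card = 1 := by
    rw [Finset.filter_eq']
    simp
  have hf2 : (univ.filter fun a : F => ¬a = 1).card = q - 1 := by
    have h := Finset.card_filter_add_card_filter_not
      (s := (univ : Finset F)) (p := fun a : F => a = 1)
    rw [Finset.card_univ] at h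
    omega
  rw [hf1, hf2]
  obtain ⟨m, rfl⟩ : ∃ m, q = m + 2 := ⟨q - 2, by omega⟩
  have e1 : 2 * (m + 2) - 1 = 2 * m + 3 := by omega
  have e2 : (m + 2) - 1 = m + 1 := by omega
  rw [e1, e2]; ring

lemma card_SL2 : Nat.card (Matrix.SpecialLinearGroup (Fin 2) F) =
    Fintype.card F ^ 3 - Fintype.card F := by
  classical
  set q := Fintype.card F with hq
  clear_value q
  have hq2 : 2 ≤ q := by rw [hq]; exact Fintype.one_lt_card
  rw [Nat.card_congr slEquiv, Nat.card_eq_fintype_card, Fintype.card_sigma]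
  have step : ∀ p : F × F, Fintype.card {r : F × F // r.1 * r.2 = p.1 * p.2 - 1}
      = if p.1 * p.2 = 1 then 2 * q - 1 else q - 1 := fun p => by
    rw [← Nat.card_eq_fintype_card, pairCard, if_congr sub_eq_zero rfl rfl, hq]
  rw [Finset.sum_congr rfl fun p _ => step p, Finset.sum_ite, Finset.sum_const,
    Finset.sum_const, smul_eq_mul, smul_eq_mul]
  have hf1 : (univ.filter fun p : F × F => p.1 * p.2 = 1).card = q - 1 := by
    rw [← Fintype.card_subtype, ← Nat.card_eq_fintype_card, pairCard,
      if_neg (one_ne_zero), hq]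
  have hf2 : (univ.filter fun p : F × F => ¬p.1 * p.2 = 1).card = q ^ 2 - (q - 1) := by
    have h := Finset.card_filter_add_card_filter_not
      (s := (univ : Finset (F × F))) (p := fun p : F × F => p.1 * p.2 = 1)
    rw [Finset.card_univ, Fintype.card_prod] at h
    have : Fintype.card F * Fintype.card F = q ^ 2 := by rw [← hq]; ring
    omega
  rw [hf1, hf2]
  obtain ⟨m, rfl⟩ : ∃ m, q = m + 2 := ⟨q - 2, by omega⟩
  have e1 : 2 * (m + 2) - 1 = 2 * m + 3 := by omega
  have e2 : (m + 2) - 1 = m + 1 := by omega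
  have e3 : (m + 2) ^ 2 - (m + 1) = m ^ 2 + 3 * m + 3 := by
    have : (m + 2) ^ 2 = m ^ 2 + 4 * m + 4 := by ring
    omega
  have e4 : (m + 2) ^ 3 - (m + 2) = m ^ 3 + 6 * m ^ 2 + 11 * m + 6 := by
    have : (m + 2) ^ 3 = m ^ 3 + 6 * m ^ 2 + 12 * m + 8 := by ring
    omega
  rw [e1, e2, e3, e4]; ring
end aux3

theorem stmt_8 {F : Type*} [Field F] [Fintype F] (lam : ℝ) (hlam : (Fintype.card F : ℝ) = lam) :
    (Nat.card {g : Matrix.SpecialLinearGroup (Fin 2) F |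
        ((g : Matrix (Fin 2) (Fin 2) F) - 1).det ≠ 0} : ℝ) /
      (Nat.card (Matrix.SpecialLinearGroup (Fin 2) F) : ℝ) =
      1 - lam / (lam ^ 2 - 1) := by
  classical
  subst hlam
  have hq2 : 2 ≤ Fintype.card F := Fintype.one_lt_card
  set q := Fintype.card F with hq
  have hSL : Nat.card (Matrix.SpecialLinearGroup (Fin 2) F) = q ^ 3 - q := card_SL2
  have hbadset : Nat.card ({g : Matrix.SpecialLinearGroup (Fin 2) F |
      ((g : Matrix (Fin 2) (Fin 2) F) - 1).det = 0} : Set _) = q ^ 2 := card_bad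
  have hcompl : ({g : Matrix.SpecialLinearGroup (Fin 2) F |
      ((g : Matrix (Fin 2) (Fin 2) F) - 1).det ≠ 0} : Set _) =
      ({g : Matrix.SpecialLinearGroup (Fin 2) F |
      ((g : Matrix (Fin 2) (Fin 2) F) - 1).det = 0} : Set _)ᶜ := rfl
  have hadd := Set.ncard_add_ncard_compl ({g : Matrix.SpecialLinearGroup (Fin 2) F |
      ((g : Matrix (Fin 2) (Fin 2) F) - 1).det = 0} : Set _)
  rw [← Nat.card_coe_set_eq, ← Nat.card_coe_set_eq, hbadset, hSL] at hadd
  rw [hcompl, hSL]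
  have hle1 : q ≤ q ^ 3 := Nat.le_self_pow (by norm_num) q
  have hle2 : q ^ 2 ≤ q ^ 3 - q := by nlinarith
  have hgood : Nat.card ↥({g : Matrix.SpecialLinearGroup (Fin 2) F |
      ((g : Matrix (Fin 2) (Fin 2) F) - 1).det = 0} : Set _)ᶜ = q ^ 3 - q - q ^ 2 := by
    omega
  rw [hgood]
  have hqR : (2 : ℝ) ≤ (q : ℝ) := by exact_mod_cast hq2
  have c1 : ((q ^ 3 - q - q ^ 2 : ℕ) : ℝ) = (q : ℝ) ^ 3 - q - q ^ 2 := by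
    rw [Nat.cast_sub hle2, Nat.cast_sub hle1]
    push_cast
    ring
  have c2 : ((q ^ 3 - q : ℕ) : ℝ) = (q : ℝ) ^ 3 - q := by
    rw [Nat.cast_sub hle1]
    push_cast
    ring
  rw [c1, c2]
  have ne1 : (q : ℝ) ^ 3 - q ≠ 0 := by nlinarith
  have ne2 : (q : ℝ) ^ 2 - 1 ≠ 0 := by nlinarith
  field_simp
end
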